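/- arXiv:1701.01144 — 3 statements merged into one kernel-verified Lean document; each statement's English description precedes it below -/
import Mathlib

section
/- Let F be a filter on the power set of Ω with ⋂_{G ∈ F} G = ∅, and let 𝔡 : F → ℝ₊ ∪ {+∞} be an increasing function with inf 𝔡(F) > 0. Then D(x,y) := 0 if x = y, and D(x,y) := inf{𝔡(G) : G ∈ F, {x,y} ∩ G = ∅} otherwise, is an ultrametric on Ω. -/
/-!
A set `G ∈ F` missing both `x` and `y` certifies `D x y ≤ 𝔡 G`. If some `G' ∈ F` misses `z`,
then for every certificate `G` of `(x, y)` directedness gives `C ∈ F` inside `G ∩ G'`; it misses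
`x` and `z`, so `D x z ≤ 𝔡 C ≤ 𝔡 G` by monotonicity, whence `D x z ≤ D x y`. If no set of `F`
misses `z`, then `D y z = ⊤`. Positivity is the bound `D x y ≥ inf 𝔡(F)`.
-/

open scoped ENNReal

namespace FilterUltrametric

variable {Ω : Type*} (F : Set (Set Ω)) (𝔡 : Set Ω → ℝ≥0∞)

noncomputable def avoidInf (x y : Ω) : ℝ≥0∞ :=
  sInf {r | ∃ G ∈ F, x ∉ G ∧ y ∉ G ∧ r = 𝔡 G}

noncomputable def dist [DecidableEq Ω] (x y : Ω) : ℝ≥0∞ :=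
  if x = y then 0 else avoidInf F 𝔡 x y

variable {F 𝔡}

theorem avoidInf_le {G : Set Ω} {x y : Ω} (hG : G ∈ F) (hx : x ∉ G) (hy : y ∉ G) :
    avoidInf F 𝔡 x y ≤ 𝔡 G :=
  sInf_le ⟨G, hG, hx, hy, rfl⟩

theorem le_avoidInf {r : ℝ≥0∞} {x y : Ω} (h : ∀ G ∈ F, x ∉ G → y ∉ G → r ≤ 𝔡 G) :
    r ≤ avoidInf F 𝔡 x y :=
  le_sInf <| by
    rintro _ ⟨G, hG, hx, hy, rfl⟩
    exact h G hG hx hy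

theorem avoidInf_comm (x y : Ω) : avoidInf F 𝔡 x y = avoidInf F 𝔡 y x :=
  le_antisymm (le_avoidInf fun _ hG hy hx => avoidInf_le hG hx hy)
    (le_avoidInf fun _ hG hx hy => avoidInf_le hG hy hx)

theorem iInf_le_avoidInf (x y : Ω) : ⨅ G ∈ F, 𝔡 G ≤ avoidInf F 𝔡 x y :=
  le_avoidInf fun G hG _ _ => iInf₂_le G hG

theorem avoidInf_eq_top {x y : Ω} (h : ∀ G ∈ F, y ∈ G) : avoidInf F 𝔡 x y = ⊤ :=
  top_le_iff.mp <| le_avoidInf fun G hG _ hy => absurd (h G hG) hy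

theorem avoidInf_le_avoidInf_of_notMem (hdir : DirectedOn (· ⊇ ·) F) (hmono : MonotoneOn 𝔡 F)
    {G' : Set Ω} {x y z : Ω} (hG' : G' ∈ F) (hz' : z ∉ G') :
    avoidInf F 𝔡 x z ≤ avoidInf F 𝔡 x y :=
  le_avoidInf fun G hG hx _ => by
    obtain ⟨C, hC, hCG, hCG'⟩ := hdir G hG G' hG'
    exact (avoidInf_le hC (fun h => hx (hCG h)) fun h => hz' (hCG' h)).trans
      (hmono hC hG hCG)

theorem avoidInf_le_max (hdir : DirectedOn (· ⊇ ·) F) (hmono : MonotoneOn 𝔡 F) (x y z : Ω) :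
    avoidInf F 𝔡 x z ≤ max (avoidInf F 𝔡 x y) (avoidInf F 𝔡 y z) := by
  by_cases h : ∃ G ∈ F, z ∉ G
  · obtain ⟨G', hG', hz'⟩ := h
    exact le_max_of_le_left (avoidInf_le_avoidInf_of_notMem hdir hmono hG' hz')
  · push Not at h
    simp [avoidInf_eq_top h]

variable [DecidableEq Ω]

theorem dist_comm (x y : Ω) : dist F 𝔡 x y = dist F 𝔡 y x := by
  by_cases h : x = y
  · rw [h]
  · rw [dist, dist, if_neg h, if_neg (Ne.symm h), avoidInf_comm]

theorem dist_pos (hbelow : 0 < ⨅ G ∈ F, 𝔡 G) {x y : Ω} (h : x ≠ y) : 0 < dist F 𝔡 x y := by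
  rw [dist, if_neg h]
  exact hbelow.trans_le (iInf_le_avoidInf x y)

theorem dist_le_max (hdir : DirectedOn (· ⊇ ·) F) (hmono : MonotoneOn 𝔡 F) (x y z : Ω) :
    dist F 𝔡 x z ≤ max (dist F 𝔡 x y) (dist F 𝔡 y z) := by
  by_cases hxz : x = z
  · simp [dist, hxz]
  by_cases hxy : x = y
  · subst hxy
    exact le_max_right _ _
  by_cases hyz : y = z
  · subst hyz
    exact le_max_left _ _
  simp only [dist, if_neg hxz, if_neg hxy, if_neg hyz]
  exact avoidInf_le_max hdir hmono x y z

end FilterUltrametric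

open FilterUltrametric in
theorem filter_to_ultrametric_general
    {Ω : Type*} [DecidableEq Ω] (F : Set (Set Ω))
    (hdir : ∀ A ∈ F, ∀ B ∈ F, ∃ C ∈ F, C ⊆ A ∧ C ⊆ B)
    (𝔡 : Set Ω → ℝ≥0∞)
    (hinc : ∀ A ∈ F, ∀ B ∈ F, A ⊆ B → 𝔡 A ≤ 𝔡 B)
    (hbelow : 0 < ⨅ G ∈ F, 𝔡 G) :
    let D : Ω → Ω → ℝ≥0∞ := fun x y =>
      if x = y then 0 else sInf {r | ∃ G ∈ F, x ∉ G ∧ y ∉ G ∧ r = 𝔡 G}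
    (∀ x y, D x y = D y x) ∧
    (∀ x y, x ≠ y → 0 < D x y) ∧
    (∀ x y z, D x z ≤ max (D x y) (D y z)) :=
  ⟨dist_comm, fun _ _ => dist_pos hbelow, dist_le_max hdir hinc⟩

/-- From a filter `F` with empty intersection and an increasing function
`𝔡 : F → (0, +∞]` bounded below away from `0`, the formula
`D(x,y) = inf {𝔡 G : G ∈ F, {x,y} ∩ G = ∅}` (and `D(x,x) = 0`) defines
an ultrametric on `Ω`. -/
theorem filter_to_ultrametric
    {Ω : Type*} [DecidableEq Ω] (F : Set (Set Ω))
    (hne : F.Nonempty)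
    (hdir : ∀ A ∈ F, ∀ B ∈ F, ∃ C ∈ F, C ⊆ A ∧ C ⊆ B)
    (hup : ∀ A ∈ F, ∀ B : Set Ω, A ⊆ B → B ∈ F)
    (hint : ⋂ G ∈ F, G = (∅ : Set Ω))
    (𝔡 : Set Ω → ℝ≥0∞)
    (hinc : ∀ A ∈ F, ∀ B ∈ F, A ⊆ B → 𝔡 A ≤ 𝔡 B)
    (hbelow : 0 < ⨅ G ∈ F, 𝔡 G) :
    let D : Ω → Ω → ℝ≥0∞ := fun x y =>
      if x = y then 0 else sInf {r | ∃ G ∈ F, x ∉ G ∧ y ∉ G ∧ r = 𝔡 G}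
    (∀ x y, D x y = D y x) ∧
    (∀ x y, x ≠ y → 0 < D x y) ∧
    (∀ x y z, D x z ≤ max (D x y) (D y z)) :=
  filter_to_ultrametric_general F hdir 𝔡 hinc hbelow
end

section
/- Let d be an ultrametric on Ω, let F_d be the filter of complements of sets contained in closed ultrametric balls, and define 𝔡_d(F) := sup{d(x,y) : x, y ∉ F}. Then the ultrametric D reconstructed from F_d and 𝔡_d via D(x,y) = inf{𝔡_d(G) : G ∈ F_d, {x,y} ∩ G = ∅} (for x ≠ y) coincides with d. -/
open scoped ENNReal

/-
In an ultrametric space every point of a closed ball is a centre, so the ball of radius `d x y`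
about `x` has diameter exactly `d x y` and misses neither `x` nor `y`; its complement is thus an
admissible `G` with `𝔡_d G = d x y`. Conversely any admissible `G` misses `x` and `y`, so
`𝔡_d G ≥ d x y`.
-/

section Ultrametric

variable {Ω α : Type*} [LinearOrder α] {d : Ω → Ω → α}

theorem ultra_le_of_le_of_le (hsymm : ∀ x y, d x y = d y x)
    (hultra : ∀ x y z, d x y ≤ max (d x z) (d z y)) {x u v : Ω} {r : α}
    (hu : d u x ≤ r) (hv : d v x ≤ r) : d u v ≤ r :=
  (hultra u v x).trans (max_le hu (hsymm x v ▸ hv))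

theorem ultra_self_le (hsymm : ∀ x y, d x y = d y x)
    (hultra : ∀ x y z, d x y ≤ max (d x z) (d z y)) (x y : Ω) : d x x ≤ d x y :=
  ultra_le_of_le_of_le hsymm hultra le_rfl (hsymm x y ▸ le_rfl)

end Ultrametric

theorem ultrametric_reconstruction_from_filter_general
    {Ω : Type*} (d : Ω → Ω → ℝ≥0∞)
    (hsymm : ∀ x y, d x y = d y x)
    (hultra : ∀ x y z, d x y ≤ max (d x z) (d z y)) :
    let Id : Set (Set Ω) := {T | ∃ x₀ u, T ⊆ {z | d z x₀ ≤ d x₀ u}}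
    let Fd : Set (Set Ω) := {G | Gᶜ ∈ Id}
    let 𝔡d : Set Ω → ℝ≥0∞ := fun G => sSup {r | ∃ u v, u ∉ G ∧ v ∉ G ∧ r = d u v}
    ∀ x y : Ω, x ≠ y →
      sInf {r | ∃ G ∈ Fd, x ∉ G ∧ y ∉ G ∧ r = 𝔡d G} = d x y := by
  intro Id Fd 𝔡d x y _
  set B : Set Ω := {z | d z x ≤ d x y}
  have hBc : Bᶜ ∈ Fd := ⟨x, y, (compl_compl B).subset⟩
  have hx : x ∉ Bᶜ := not_not.mpr (ultra_self_le hsymm hultra x y)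
  have hy : y ∉ Bᶜ := not_not.mpr (hsymm y x).le
  have hdiam : 𝔡d Bᶜ ≤ d x y := sSup_le <| by
    rintro r ⟨u, v, hu, hv, rfl⟩
    exact ultra_le_of_le_of_le hsymm hultra (not_not.mp hu) (not_not.mp hv)
  refine le_antisymm (sInf_le_of_le ⟨Bᶜ, hBc, hx, hy, rfl⟩ hdiam) (le_sInf ?_)
  rintro r ⟨G, -, hxG, hyG, rfl⟩
  exact le_sSup ⟨x, y, hxG, hyG, rfl⟩

/-- Reconstruction of an ultrametric from its ball filter: with
`I_d` the ideal of subsets of closed balls of attained radius, `F_d` the filter of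
their complements, and `𝔡_d F = sup {d u v : u, v ∉ F}`, the formula
`D(x,y) = inf {𝔡_d G : G ∈ F_d, {x,y} ∩ G = ∅}` recovers `d(x,y)` for `x ≠ y`. -/
theorem ultrametric_reconstruction_from_filter
    {Ω : Type*} (d : Ω → Ω → ℝ≥0∞)
    (hrefl : ∀ x y, d x y = 0 ↔ x = y)
    (hsymm : ∀ x y, d x y = d y x)
    (hultra : ∀ x y z, d x y ≤ max (d x z) (d z y)) :
    let Id : Set (Set Ω) := {T | ∃ x₀ u, T ⊆ {z | d z x₀ ≤ d x₀ u}}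
    let Fd : Set (Set Ω) := {G | Gᶜ ∈ Id}
    let 𝔡d : Set Ω → ℝ≥0∞ := fun G => sSup {r | ∃ u v, u ∉ G ∧ v ∉ G ∧ r = d u v}
    ∀ x y : Ω, x ≠ y →
      sInf {r | ∃ G ∈ Fd, x ∉ G ∧ y ∉ G ∧ r = 𝔡d G} = d x y :=
  ultrametric_reconstruction_from_filter_general d hsymm hultra
end

section
/- Let f₁, …, f_N : D → ℝ be functions, Z(k, x) := Σ_α exp(f_α(x)/k) and F(k, x) := −k·ln Z(k, x) (with the convention that f_α here play the role of −F_α/T). Assume the minimum value κ₀(x) := min_α(−f_α(x)) is attained by exactly λ₀(x) indices. Then F extends continuously to k = 0 with F(0, x) = κ₀(x), its first derivative in k at k = 0 equals −ln λ₀(x), and all higher-order derivatives ∂ₖᵐ F at k = 0⁺ vanish for m ≥ 2. -/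
/-!
Let `κ` be the least energy and `λ` its multiplicity. Factoring out the ground state,
`Z(k) = e^{-κ/k} (λ + T(k))` where `T` is a finite sum of terms `e^{-c/k}` with `c > 0`, so
`F(k) = κ - k L(k)` with `L = log (λ + T)`. Finite sums of `b e^{-c/k} / k^n` (`c > 0`) tend to `0`
as `k → 0⁺` and are closed under products and `d/dk`; by induction `L^{(j+1)} = P / (λ + T)^{j+1}`
with `P` of this kind, so every derivative of `L` tends to `0`. Leibniz's rule gives
`F^{(m)} = -(m L^{(m-1)} + k L^{(m)})`, whence the limits `κ`, `-log λ` and `0`.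
-/

open Filter Topology Real Set
open scoped ContDiff

inductive ExpFlat : (ℝ → ℝ) → Prop
  | exp_div_pow (b c : ℝ) (n : ℕ) (hc : 0 < c) : ExpFlat fun k => b * exp (-c / k) / k ^ n
  | add {φ ψ : ℝ → ℝ} : ExpFlat φ → ExpFlat ψ → ExpFlat fun k => φ k + ψ k
  | congr {φ ψ : ℝ → ℝ} : ExpFlat φ → EqOn φ ψ (Ioi 0) → ExpFlat ψ

namespace ExpFlat

variable {φ ψ : ℝ → ℝ}

theorem zero : ExpFlat fun _ => 0 :=
  (exp_div_pow 0 1 0 one_pos).congr fun k _ => by simp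

theorem const_mul (hφ : ExpFlat φ) (a : ℝ) : ExpFlat fun k => a * φ k := by
  induction hφ with
  | exp_div_pow b c n hc => exact (exp_div_pow (a * b) c n hc).congr fun k _ => by ring
  | add _ _ ih₁ ih₂ => exact (ih₁.add ih₂).congr fun k _ => by ring
  | congr _ h ih => exact ih.congr fun k hk => by simp only [h hk]

theorem sub (hφ : ExpFlat φ) (hψ : ExpFlat ψ) : ExpFlat fun k => φ k - ψ k :=
  (hφ.add (hψ.const_mul (-1))).congr fun k _ => by ring

theorem mul_exp_div_pow (hφ : ExpFlat φ) (b c : ℝ) (n : ℕ) (hc : 0 < c) :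
    ExpFlat fun k => φ k * (b * exp (-c / k) / k ^ n) := by
  induction hφ with
  | exp_div_pow b' c' n' hc' =>
    refine (exp_div_pow (b' * b) (c' + c) (n' + n) (by positivity)).congr fun k _ => ?_
    simp only [pow_add, neg_add, add_div, exp_add]
    ring
  | add _ _ ih₁ ih₂ => exact (ih₁.add ih₂).congr fun k _ => by ring
  | congr _ h ih => exact ih.congr fun k hk => by simp only [h hk]

theorem mul (hφ : ExpFlat φ) (hψ : ExpFlat ψ) : ExpFlat fun k => φ k * ψ k := by
  induction hψ with
  | exp_div_pow b c n hc => exact hφ.mul_exp_div_pow b c n hc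
  | add _ _ ih₁ ih₂ => exact (ih₁.add ih₂).congr fun k _ => by ring
  | congr _ h ih => exact ih.congr fun k hk => by simp only [h hk]

theorem sum {ι : Type*} (s : Finset ι) {φ : ι → ℝ → ℝ} (h : ∀ i ∈ s, ExpFlat (φ i)) :
    ExpFlat fun k => ∑ i ∈ s, φ i k := by
  classical
  induction s using Finset.induction_on with
  | empty => simpa using zero
  | insert a s ha ih =>
    simp only [Finset.sum_insert ha]
    exact (h a (s.mem_insert_self a)).add (ih fun i hi => h i (Finset.mem_insert_of_mem hi))

theorem sum_exp_neg_sub_div {ι : Type*} (s : Finset ι) (e : ι → ℝ) {κ : ℝ} (he : ∀ α ∈ s, κ < e α) :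
    ExpFlat fun k => ∑ α ∈ s, exp (-(e α - κ) / k) :=
  sum s fun α hα => (exp_div_pow 1 _ 0 (sub_pos.2 (he α hα))).congr fun k _ => by simp

theorem tendsto_exp_div_pow (b c : ℝ) (n : ℕ) (hc : 0 < c) :
    Tendsto (fun k : ℝ => b * exp (-c / k) / k ^ n) (𝓝[>] 0) (𝓝 0) := by
  have h := ((tendsto_rpow_mul_exp_neg_mul_atTop_nhds_zero n c hc).comp
    tendsto_inv_nhdsGT_zero).const_mul b
  rw [mul_zero] at h
  refine h.congr fun k => ?_
  simp only [Function.comp_apply, rpow_natCast, inv_pow, div_eq_mul_inv]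
  ring

theorem tendsto (hφ : ExpFlat φ) : Tendsto φ (𝓝[>] 0) (𝓝 0) := by
  induction hφ with
  | exp_div_pow b c n hc => exact tendsto_exp_div_pow b c n hc
  | add _ _ ih₁ ih₂ => simpa using ih₁.add ih₂
  | congr _ h ih => exact ih.congr' (eventuallyEq_of_mem self_mem_nhdsWithin h)

theorem contDiffOn (hφ : ExpFlat φ) : ContDiffOn ℝ ∞ φ (Ioi 0) := by
  induction hφ with
  | exp_div_pow b c n hc =>
    intro k (hk : 0 < k)
    apply ContDiffAt.contDiffWithinAt
    fun_prop (disch := simp [hk.ne'])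
  | add _ _ ih₁ ih₂ => exact ih₁.add ih₂
  | congr _ h ih => exact ih.congr fun k hk => (h hk).symm

theorem differentiableAt (hφ : ExpFlat φ) {k : ℝ} (hk : 0 < k) : DifferentiableAt ℝ φ k :=
  (hφ.contDiffOn.contDiffAt (Ioi_mem_nhds hk)).differentiableAt (by simp)

theorem hasDerivAt_exp_div_pow (b c : ℝ) (n : ℕ) {k : ℝ} (hk : k ≠ 0) :
    HasDerivAt (fun k => b * exp (-c / k) / k ^ n)
      (b * c * exp (-c / k) / k ^ (n + 2) - b * n * exp (-c / k) / k ^ (n + 1)) k := by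
  have hinv : HasDerivAt (fun k => -c / k) (c / k ^ 2) k := by
    simpa only [div_eq_mul_inv, neg_mul, neg_neg, mul_neg] using
      (hasDerivAt_inv hk).const_mul (-c)
  refine ((hinv.exp.const_mul b).div (hasDerivAt_pow n k) (pow_ne_zero n hk)).congr_deriv ?_
  rcases n with _ | n
  · simp only [CharP.cast_eq_zero, zero_mul, mul_zero, sub_zero, pow_zero, mul_one, one_pow,
      div_one]
    field_simp
    ring
  · simp only [Nat.add_sub_cancel]
    field_simp
    ring

theorem deriv (hφ : ExpFlat φ) : ExpFlat (deriv φ) := by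
  induction hφ with
  | exp_div_pow b c n hc =>
    refine ((exp_div_pow (b * c) c (n + 2) hc).sub (exp_div_pow (b * n) c (n + 1) hc)).congr
      fun k (hk : 0 < k) => (hasDerivAt_exp_div_pow b c n hk.ne').deriv.symm
  | add h₁ h₂ ih₁ ih₂ =>
    exact (ih₁.add ih₂).congr fun k (hk : 0 < k) =>
      (deriv_add (h₁.differentiableAt hk) (h₂.differentiableAt hk)).symm
  | congr _ h ih => exact ih.congr (h.deriv isOpen_Ioi)

end ExpFlat

section LogOfFlatPerturbation

variable {c : ℝ} {T : ℝ → ℝ}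

theorem iteratedDeriv_log_const_add_eqOn (hT : ExpFlat T) (hS : ∀ k > 0, c + T k ≠ 0) (j : ℕ) :
    ∃ P, ExpFlat P ∧ EqOn (iteratedDeriv (j + 1) fun k => log (c + T k))
      (fun k => P k / (c + T k) ^ (j + 1)) (Ioi 0) := by
  have hderS : ∀ k > 0, HasDerivAt (fun k => c + T k) (deriv T k) k := fun k hk =>
    (hT.differentiableAt hk).hasDerivAt.const_add c
  induction j with
  | zero =>
    refine ⟨deriv T, hT.deriv, fun k (hk : 0 < k) => ?_⟩
    rw [zero_add, iteratedDeriv_one]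
    simpa using ((hderS k hk).log (hS k hk)).deriv
  | succ j ih =>
    obtain ⟨P, hP, hEq⟩ := ih
    refine ⟨fun k => c * deriv P k + deriv P k * T k - (j + 1) * (P k * deriv T k),
      ((hP.deriv.const_mul c).add (hP.deriv.mul hT)).sub ((hP.mul hT.deriv).const_mul _),
      fun k (hk : 0 < k) => ?_⟩
    have hquot := (hP.differentiableAt hk).hasDerivAt.fun_div ((hderS k hk).fun_pow (j + 1))
      (pow_ne_zero _ (hS k hk))
    rw [iteratedDeriv_succ, hEq.deriv isOpen_Ioi hk, hquot.deriv]
    have hSk := hS k hk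
    simp only [Nat.add_sub_cancel]
    push_cast
    field_simp
    ring

theorem tendsto_iteratedDeriv_log_const_add (hT : ExpFlat T) (hc : c ≠ 0)
    (hS : ∀ k > 0, c + T k ≠ 0) (j : ℕ) :
    Tendsto (iteratedDeriv (j + 1) fun k => log (c + T k)) (𝓝[>] 0) (𝓝 0) := by
  obtain ⟨P, hP, hEq⟩ := iteratedDeriv_log_const_add_eqOn hT hS j
  have hS₀ : Tendsto (fun k => c + T k) (𝓝[>] 0) (𝓝 c) := by
    simpa using hT.tendsto.const_add c
  have h := hP.tendsto.div (hS₀.pow (j + 1)) (pow_ne_zero _ hc)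
  rw [zero_div] at h
  exact h.congr' (eventuallyEq_nhdsWithin_of_eqOn hEq).symm

end LogOfFlatPerturbation

theorem iteratedDeriv_succ_id_mul {𝕜 : Type*} [NontriviallyNormedField 𝕜] {f : 𝕜 → 𝕜} {x : 𝕜}
    (j : ℕ) (hf : ContDiffAt 𝕜 (j + 1) f x) :
    iteratedDeriv (j + 1) (fun y => y * f y) x =
      (j + 1) * iteratedDeriv j f x + x * iteratedDeriv (j + 1) f x := by
  rw [iteratedDeriv_fun_mul contDiffAt_fun_id hf]
  simp [Finset.sum_range_succ', iteratedDeriv_fun_id]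

theorem tendsto_iteratedDeriv_of_eqOn_sub_mul_log {F T : ℝ → ℝ} {κ c : ℝ} (hT : ExpFlat T)
    (hc : c ≠ 0) (hS : ∀ k > 0, c + T k ≠ 0)
    (hF : EqOn F (fun k => κ - k * log (c + T k)) (Ioi 0)) :
    Tendsto F (𝓝[>] 0) (𝓝 κ) ∧ Tendsto (deriv F) (𝓝[>] 0) (𝓝 (-log c)) ∧
      ∀ m, 2 ≤ m → Tendsto (iteratedDeriv m F) (𝓝[>] 0) (𝓝 0) := by
  set L := fun k => log (c + T k)
  have hL : Tendsto L (𝓝[>] 0) (𝓝 (log c)) :=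
    (continuousAt_log hc).tendsto.comp (by simpa using hT.tendsto.const_add c)
  have hL' := tendsto_iteratedDeriv_log_const_add hT hc hS
  have hid : Tendsto (fun k : ℝ => k) (𝓝[>] 0) (𝓝 0) :=
    tendsto_nhdsWithin_of_tendsto_nhds tendsto_id
  have hderiv (j : ℕ) : EqOn (iteratedDeriv (j + 1) F)
      (fun k => -((j + 1) * iteratedDeriv j L k + k * iteratedDeriv (j + 1) L k)) (Ioi 0) := by
    intro k (hk : 0 < k)
    have hLk : ContDiffAt ℝ ∞ L k :=
      (contDiffAt_const.add (hT.contDiffOn.contDiffAt (Ioi_mem_nhds hk))).log (hS k hk)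
    rw [hF.iteratedDeriv_of_isOpen isOpen_Ioi (j + 1) hk, iteratedDeriv_const_sub j.succ_pos,
      iteratedDeriv_neg, iteratedDeriv_succ_id_mul j (hLk.of_le (by exact_mod_cast le_top))]
  refine ⟨?_, ?_, fun m hm => ?_⟩
  · have h := tendsto_const_nhds (x := κ).sub (hid.mul hL)
    rw [zero_mul, sub_zero] at h
    exact h.congr' (eventuallyEq_nhdsWithin_of_eqOn hF).symm
  · have h := ((hL.const_mul 1).add (hid.mul (hL' 0))).neg
    rw [one_mul, zero_mul, add_zero] at h
    rw [← iteratedDeriv_one]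
    exact h.congr' (eventuallyEq_nhdsWithin_of_eqOn (by simpa using hderiv 0)).symm
  · obtain ⟨j, rfl⟩ := Nat.exists_eq_add_of_le' hm
    have h := (((hL' j).const_mul ((j + 1 : ℕ) + 1 : ℝ)).add (hid.mul (hL' (j + 1)))).neg
    rw [mul_zero, zero_mul, add_zero, neg_zero] at h
    exact h.congr' (eventuallyEq_nhdsWithin_of_eqOn (hderiv (j + 1))).symm

section FiniteSpectrum

open Finset

variable {ι : Type*} [Fintype ι]

theorem sum_exp_neg_div_eq (e : ι → ℝ) (κ k : ℝ) :
    ∑ α, exp (-e α / k) =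
      exp (-κ / k) * (#{α | e α = κ} + ∑ α with e α ≠ κ, exp (-(e α - κ) / k)) := by
  rw [← sum_filter_add_sum_filter_not univ (fun α => e α = κ), mul_add, mul_sum]
  congr 1
  · rw [sum_congr rfl fun α hα => by rw [(mem_filter.1 hα).2], sum_const, nsmul_eq_mul, mul_comm]
  · refine sum_congr rfl fun α _ => ?_
    rw [← exp_add]
    ring_nf

theorem tendsto_iteratedDeriv_neg_mul_log_sum_exp {e : ι → ℝ} {κ : ℝ} (hκ : IsLeast (range e) κ) :
    let F := fun k => -k * log (∑ α, exp (-e α / k))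
    Tendsto F (𝓝[>] 0) (𝓝 κ) ∧ Tendsto (deriv F) (𝓝[>] 0) (𝓝 (-log #{α | e α = κ})) ∧
      ∀ m, 2 ≤ m → Tendsto (iteratedDeriv m F) (𝓝[>] 0) (𝓝 0) := by
  set T := fun k => ∑ α with e α ≠ κ, exp (-(e α - κ) / k)
  have hT : ExpFlat T := ExpFlat.sum_exp_neg_sub_div _ e fun α hα =>
    lt_of_le_of_ne (hκ.2 (mem_range_self α)) (Ne.symm (mem_filter.1 hα).2)
  obtain ⟨α₀, hα₀⟩ := hκ.1
  have hlam : (0 : ℝ) < #{α | e α = κ} := by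
    exact_mod_cast card_pos.2 ⟨α₀, mem_filter.2 ⟨mem_univ _, hα₀⟩⟩
  have hS (k : ℝ) : 0 < #{α | e α = κ} + T k :=
    add_pos_of_pos_of_nonneg hlam (sum_nonneg fun _ _ => (exp_pos _).le)
  refine tendsto_iteratedDeriv_of_eqOn_sub_mul_log hT hlam.ne' (fun k _ => (hS k).ne')
    fun k (hk : 0 < k) => ?_
  have hZ : ∑ α, exp (-e α / k) = exp (-κ / k) * (#{α | e α = κ} + T k) :=
    sum_exp_neg_div_eq e κ k
  change -k * log (∑ α, exp (-e α / k)) = κ - k * log (#{α | e α = κ} + T k)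
  rw [hZ, log_mul (exp_ne_zero _) (hS k).ne', log_exp]
  field_simp
  ring

end FiniteSpectrum

/-- For `Z(k,x) = Σ_α exp(f_α(x)/k)` and `F(k,x) = -k·log Z(k,x)`, with
`κ₀(x) = min_α (-f_α(x))` attained by `lam₀(x)` indices: as `k → 0⁺`, `F` tends to
`κ₀`, its first `k`-derivative tends to `-log lam₀`, and every higher-order
`k`-derivative (order `m ≥ 2`) tends to `0`. -/
theorem tropical_free_energy_expansion
    {D : Type*} (N : ℕ) (hN : 0 < N) (f : Fin N → D → ℝ) (x : D) :
    let Z : ℝ → ℝ := fun k => ∑ α : Fin N, Real.exp (f α x / k)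
    let F : ℝ → ℝ := fun k => -k * Real.log (Z k)
    let κ₀ : ℝ := sInf (Set.range fun α : Fin N => -(f α x))
    let lam₀ : ℕ := (Finset.univ.filter fun α : Fin N => -(f α x) = κ₀).card
    Tendsto F (𝓝[>] (0 : ℝ)) (𝓝 κ₀) ∧
    Tendsto (deriv F) (𝓝[>] (0 : ℝ)) (𝓝 (-Real.log lam₀)) ∧
    (∀ m : ℕ, 2 ≤ m → Tendsto (iteratedDeriv m F) (𝓝[>] (0 : ℝ)) (𝓝 0)) := by
  intro Z F κ₀ lam₀
  have : Nonempty (Fin N) := ⟨⟨0, hN⟩⟩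
  have hκ₀ : IsLeast (range fun α : Fin N => -(f α x)) κ₀ :=
    ⟨(range_nonempty _).csInf_mem (finite_range _), fun _ h => csInf_le (finite_range _).bddBelow h⟩
  simpa only [neg_neg] using tendsto_iteratedDeriv_neg_mul_log_sum_exp hκ₀
end
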